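/- arXiv:math/0201170 — 5 statements merged into one kernel-verified Lean document; each statement's English description precedes it below -/
import Mathlib

section
/- Let A be a complex unital Banach algebra, let u, η ∈ A and h ∈ ℂ, and assume the Lie superalgebra relation u * η - η * u = h • η. Define x := exp(u), θ := exp(u) * η, and q := exp(h). Then x * θ = q • (θ * x). -/
/-! The relation says `u η = η (h + u)`, i.e. `η` intertwines `h + u` with `u`. Exponentiating
this intertwining relation gives `exp u η = η exp (h + u) = exp h • η exp u`, since the scalar `h`
commutes with `u`. -/

open NormedSpace

theorem NormedSpace.exp_algebraMap_add {𝕂 𝔸 : Type*} [RCLike 𝕂] [NormedRing 𝔸]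
    [NormedAlgebra 𝕂 𝔸] [CompleteSpace 𝔸] (z : 𝕂) (a : 𝔸) :
    exp (algebraMap 𝕂 𝔸 z + a) = exp z • exp a := by
  let : NormedAlgebra ℚ 𝔸 := NormedAlgebra.restrictScalars ℚ 𝕂 𝔸
  rw [exp_add_of_commute (Algebra.commutes z a), ← algebraMap_exp_comm, ← Algebra.smul_def]

/-- From the Lie superalgebra relation `u η - η u = h η`, with `x = exp u`,
`θ = exp u * η`, `q = exp h`, we recover the quantum superplane relation
`x θ = q θ x`. -/
theorem quantum_superplane_relation_from_lie
    {A : Type*} [NormedRing A] [NormedAlgebra ℂ A] [CompleteSpace A]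
    (u η : A) (h : ℂ) (hrel : u * η - η * u = h • η) :
    (NormedSpace.exp u) * (NormedSpace.exp u * η) =
      Complex.exp h • ((NormedSpace.exp u * η) * NormedSpace.exp u) := by
  let : NormedAlgebra ℚ A := NormedAlgebra.restrictScalars ℚ ℂ A
  have hintertwine : SemiconjBy η (algebraMap ℂ A h + u) u := by
    rw [SemiconjBy, mul_add, ← Algebra.commutes, ← Algebra.smul_def, ← hrel, sub_add_cancel]
  have hexp_intertwine : exp u * η = Complex.exp h • (η * exp u) := by
    rw [← hintertwine.exp_right.eq, exp_algebraMap_add, Complex.exp_eq_exp_ℂ, mul_smul_comm]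
  calc exp u * (exp u * η) = exp u * (Complex.exp h • (η * exp u)) := by rw [hexp_intertwine]
    _ = Complex.exp h • ((exp u * η) * exp u) := by rw [mul_smul_comm, mul_assoc]
end

section
/- Let A be a complex unital Banach algebra, let u, du ∈ A and h ∈ ℂ with h ≠ 0, and assume the first-order calculus relation u * du - du * u = (2h) • du. Define x := exp(u) and dx := ((exp(2h) - 1)/(2h)) • (du * exp(u)). Then x * dx = exp(2h) • (dx * x). -/
/-!
The relation says that `du` semiconjugates `u + 2h` to `u`: `du * (u + 2h) = u * du`.
Semiconjugacy passes to exponentials, and `exp (u + 2h) = e^{2h} exp u` because the scalar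
is central, so `x * du = e^{2h} du * x`; the claim follows by multiplying on the right by `x`.
-/

open NormedSpace

theorem exp_mul_eq_smul_mul_exp_of_sub_eq_smul {A : Type*} [NormedRing A] [NormedAlgebra ℂ A]
    [CompleteSpace A] {u a : A} {c : ℂ} (h : u * a - a * u = c • a) :
    exp u * a = Complex.exp c • (a * exp u) := by
  -- `exp_add_of_commute` and `SemiconjBy.exp_right` are stated for `ℚ`-algebras.
  let : NormedAlgebra ℚ A := NormedAlgebra.restrictScalars ℚ ℂ A
  have hsemiconj : SemiconjBy a (u + algebraMap ℂ A c) u := by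
    rw [SemiconjBy, mul_add, ← Algebra.commutes, ← Algebra.smul_def, ← h, add_sub_cancel]
  have hexp : exp (u + algebraMap ℂ A c) = exp u * algebraMap ℂ A (Complex.exp c) := by
    rw [exp_add_of_commute (Algebra.commutes c u).symm, Complex.exp_eq_exp_ℂ,
      algebraMap_exp_comm]
  rw [← hsemiconj.exp_right, hexp, ← mul_assoc, ← Algebra.commutes, Algebra.smul_def]

theorem x_dx_relation_general
    {A : Type*} [NormedRing A] [NormedAlgebra ℂ A] [CompleteSpace A]
    (u du : A) (h : ℂ)
    (hrel : u * du - du * u = (2 * h) • du) :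
    (NormedSpace.exp u) *
        (((Complex.exp (2 * h) - 1) / (2 * h)) • (du * NormedSpace.exp u)) =
      Complex.exp (2 * h) •
        ((((Complex.exp (2 * h) - 1) / (2 * h)) • (du * NormedSpace.exp u)) *
          NormedSpace.exp u) := by
  rw [mul_smul_comm, ← mul_assoc, exp_mul_eq_smul_mul_exp_of_sub_eq_smul hrel, smul_mul_assoc,
    smul_mul_assoc, smul_comm]

/-- From the calculus relation `[u, du] = 2h du`, with `x = exp u` and
`dx = ((e^{2h} - 1)/(2h)) • (du * exp u)`, we recover `x dx = e^{2h} dx x`. -/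
theorem x_dx_relation
    {A : Type*} [NormedRing A] [NormedAlgebra ℂ A] [CompleteSpace A]
    (u du : A) (h : ℂ) (hne : h ≠ 0)
    (hrel : u * du - du * u = (2 * h) • du) :
    (NormedSpace.exp u) *
        (((Complex.exp (2 * h) - 1) / (2 * h)) • (du * NormedSpace.exp u)) =
      Complex.exp (2 * h) •
        ((((Complex.exp (2 * h) - 1) / (2 * h)) • (du * NormedSpace.exp u)) *
          NormedSpace.exp u) :=
  x_dx_relation_general u du h hrel
end

section
/- Let A be a complex unital Banach algebra, let u, η, du ∈ A and h ∈ ℂ with h ≠ 0, and assume u * η - η * u = h • η, u * du - du * u = (2h) • du, and η * du = -(du * η). Define θ := exp(u) * η and dx := ((exp(2h) - 1)/(2h)) • (du * exp(u)). Then θ * dx = -exp(h) • (dx * θ). -/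
/-!
Conjugation by `exp u` rescales eigenvectors of `ad u`: from `[u, a] = c a` one gets
`a (u + c) = u a`, hence `exp u * a = e^c a * exp u`. So `exp u` `q`-commutes with `η` and
`q²`-commutes with `du` (`q = e^h`), and moving `η` past `du` costs a sign; counting the
powers of `q` on both sides of `θ dx` and `dx θ` leaves the factor `-q`.
-/

open NormedSpace

section Exp

variable {A : Type*} [NormedRing A] [NormedAlgebra ℂ A] [CompleteSpace A]

theorem NormedSpace.exp_add_algebraMap (x : A) (c : ℂ) :
    exp (x + algebraMap ℂ A c) = Complex.exp c • exp x := by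
  -- Mathlib's `exp` lemmas need a `NormedAlgebra ℚ` structure, obtained here by restriction.
  let _ := NormedAlgebra.restrictScalars ℚ ℂ A
  rw [exp_add_of_commute (Algebra.commutes c x).symm, ← algebraMap_exp_comm,
    ← Complex.exp_eq_exp_ℂ, ← Algebra.commutes, Algebra.smul_def]

theorem NormedSpace.exp_mul_of_mul_sub_mul_eq_smul {u a : A} {c : ℂ}
    (h : u * a - a * u = c • a) : exp u * a = Complex.exp c • (a * exp u) := by
  have hsemiconj : SemiconjBy a (u + algebraMap ℂ A c) u := by
    rw [SemiconjBy, mul_add, ← Algebra.commutes, ← Algebra.smul_def, ← h, add_sub_cancel]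
  let _ := NormedAlgebra.restrictScalars ℚ ℂ A
  rw [← hsemiconj.exp_right.eq, exp_add_algebraMap, mul_smul_comm]

end Exp

theorem mul_mul_eq_neg_smul_mul_mul_of_smul_commute {R A : Type*} [CommRing R] [Ring A]
    [Algebra R A] {e η d : A} {p : R} (hη : e * η = p • (η * e)) (hd : e * d = p ^ 2 • (d * e))
    (hηd : η * d = -(d * η)) :
    (e * η) * (d * e) = -p • ((d * e) * (e * η)) := by
  calc (e * η) * (d * e) = -(e * d * (η * e)) := by
        simp only [mul_assoc, ← mul_assoc η, hηd, neg_mul, mul_neg]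
    _ = -(p ^ 2 • (d * e * (η * e))) := by rw [hd, smul_mul_assoc]
    _ = -p • ((d * e) * (e * η)) := by
        rw [hη, mul_smul_comm, smul_smul, neg_mul, neg_smul, ← sq]

theorem theta_dx_relation_general
    {A : Type*} [NormedRing A] [NormedAlgebra ℂ A] [CompleteSpace A]
    (u η du : A) (h : ℂ)
    (hη : u * η - η * u = h • η)
    (hdu : u * du - du * u = (2 * h) • du)
    (hanti : η * du = -(du * η)) :
    (NormedSpace.exp u * η) *
        (((Complex.exp (2 * h) - 1) / (2 * h)) • (du * NormedSpace.exp u)) =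
      -Complex.exp h •
        ((((Complex.exp (2 * h) - 1) / (2 * h)) • (du * NormedSpace.exp u)) *
          (NormedSpace.exp u * η)) := by
  have hexp_du := exp_mul_of_mul_sub_mul_eq_smul hdu
  rw [two_mul, Complex.exp_add, ← sq] at hexp_du
  rw [mul_smul_comm, smul_mul_assoc, smul_comm,
    mul_mul_eq_neg_smul_mul_mul_of_smul_commute (exp_mul_of_mul_sub_mul_eq_smul hη) hexp_du hanti]

/-- From `[u, η] = h η`, `[u, du] = 2h du`, `{η, du} = 0`, with `θ = exp u * η`
and `dx = ((e^{2h} - 1)/(2h)) • (du * exp u)`, we recover `θ dx = -e^h dx θ`. -/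
theorem theta_dx_relation
    {A : Type*} [NormedRing A] [NormedAlgebra ℂ A] [CompleteSpace A]
    (u η du : A) (h : ℂ) (hne : h ≠ 0)
    (hη : u * η - η * u = h • η)
    (hdu : u * du - du * u = (2 * h) • du)
    (hanti : η * du = -(du * η)) :
    (NormedSpace.exp u * η) *
        (((Complex.exp (2 * h) - 1) / (2 * h)) • (du * NormedSpace.exp u)) =
      -Complex.exp h •
        ((((Complex.exp (2 * h) - 1) / (2 * h)) • (du * NormedSpace.exp u)) *
          (NormedSpace.exp u * η)) :=
  theta_dx_relation_general u η du h hη hdu hanti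
end

section
/- Let A be a complex unital Banach algebra, let u, η, du, dη ∈ A and h ∈ ℂ with h ≠ 0, and assume u * η - η * u = h • η, u * du - du * u = (2h) • du, and u * dη - dη * u = h • dη. Define x := exp(u), θ := exp(u) * η, dx := ((exp(2h) - 1)/(2h)) • (du * exp(u)), and dθ := exp(u) * dη + dx * η. Then x * dθ = exp(h) • (dθ * x) + (exp(2h) - 1) • (dx * θ). -/
/-!
`[u, a] = c a` says `u a = a (u + c)`, so `a` intertwines `exp (u + c) = e^c exp u` with `exp u`:
`exp u · a = e^c a exp u`. Hence `x = exp u` commutes with `η` and `dη` up to `q = e^h` and with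
`du` up to `e^{2h}`, and the relation follows by moving `x` to the right in each term.
-/

open NormedSpace

theorem NormedSpace.exp_mul_of_commutator_eq_smul {𝕂 A : Type*} [RCLike 𝕂] [NormedRing A]
    [NormedAlgebra 𝕂 A] [CompleteSpace A] {u a : A} {c : 𝕂} (h : u * a - a * u = c • a) :
    exp u * a = exp c • (a * exp u) := by
  let +nondep : NormedAlgebra ℚ A := .restrictScalars ℚ 𝕂 A
  have hsemi : SemiconjBy a (u + algebraMap 𝕂 A c) u := by
    rw [SemiconjBy, mul_add, ← Algebra.commutes, ← Algebra.smul_def, ← h, add_sub_cancel]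
  have hshift : exp (u + algebraMap 𝕂 A c) = exp u * algebraMap 𝕂 A (exp c) := by
    rw [exp_add_of_commute (Algebra.commutes c u).symm, algebraMap_exp_comm]
  rw [← hsemi.exp_right.eq, hshift, ← Algebra.commutes, ← mul_assoc, ← Algebra.commutes,
    mul_assoc, ← Algebra.smul_def]

theorem superplane_relation_of_smul_commute {R A : Type*} [CommRing R] [Ring A] [Algebra R A]
    {x η dη du : A} {q r : R} (c : R) (hη : x * η = q • (η * x)) (hdη : x * dη = q • (dη * x))
    (hdu : x * du = r • (du * x)) :
    x * (x * dη + c • (du * x) * η) =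
      q • ((x * dη + c • (du * x) * η) * x) + (r - 1) • (c • (du * x) * (x * η)) := by
  have hxxdη : x * (x * dη) = (q * q) • (dη * x * x) := by
    rw [hdη, mul_smul_comm, ← mul_assoc, hdη, smul_mul_assoc, smul_smul]
  have hxdu : x * (du * x * η) = (q * r) • (du * x * (η * x)) := by
    rw [mul_assoc, mul_assoc, hη, ← mul_assoc, hdu]
    simp only [mul_smul_comm, smul_mul_assoc, smul_smul, mul_assoc]
  rw [mul_add, smul_mul_assoc, mul_smul_comm, hxxdη, hxdu, hdη, hη]
  simp only [add_mul, smul_mul_assoc, mul_smul_comm, smul_add, smul_smul, mul_assoc]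
  match_scalars <;> ring

theorem x_dtheta_relation_general
    {A : Type*} [NormedRing A] [NormedAlgebra ℂ A] [CompleteSpace A]
    (u η du dη : A) (h : ℂ)
    (hη : u * η - η * u = h • η)
    (hdu : u * du - du * u = (2 * h) • du)
    (hdη : u * dη - dη * u = h • dη) :
    let x := NormedSpace.exp u
    let θ := NormedSpace.exp u * η
    let dx := ((Complex.exp (2 * h) - 1) / (2 * h)) • (du * NormedSpace.exp u)
    let dθ := NormedSpace.exp u * dη + dx * η
    x * dθ = Complex.exp h • (dθ * x) + (Complex.exp (2 * h) - 1) • (dx * θ) := by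
  intro x θ dx dθ
  rw [Complex.exp_eq_exp_ℂ]
  exact superplane_relation_of_smul_commute _ (exp_mul_of_commutator_eq_smul hη)
    (exp_mul_of_commutator_eq_smul hdη) (exp_mul_of_commutator_eq_smul hdu)

/-- From `[u, η] = h η`, `[u, du] = 2h du`, `[u, dη] = h dη`, with
`x = exp u`, `θ = x η`, `dx = ((e^{2h}-1)/(2h)) • (du x)`, `dθ = x dη + dx η`,
we recover `x dθ = e^h dθ x + (e^{2h} - 1) dx θ`. -/
theorem x_dtheta_relation
    {A : Type*} [NormedRing A] [NormedAlgebra ℂ A] [CompleteSpace A]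
    (u η du dη : A) (h : ℂ) (hne : h ≠ 0)
    (hη : u * η - η * u = h • η)
    (hdu : u * du - du * u = (2 * h) • du)
    (hdη : u * dη - dη * u = h • dη) :
    let x := NormedSpace.exp u
    let θ := NormedSpace.exp u * η
    let dx := ((Complex.exp (2 * h) - 1) / (2 * h)) • (du * NormedSpace.exp u)
    let dθ := NormedSpace.exp u * dη + dx * η
    x * dθ = Complex.exp h • (dθ * x) + (Complex.exp (2 * h) - 1) • (dx * θ) :=
  x_dtheta_relation_general u η du dη h hη hdu hdη
end

section
/- Let A be a complex unital Banach algebra, let u, η, du, dη ∈ A and h ∈ ℂ with h ≠ 0, and assume u * η - η * u = h • η, η * η = 0, u * du - du * u = (2h) • du, u * dη - dη * u = h • dη, η * du = -(du * η), and η * dη = dη * η. Define θ := exp(u) * η, dx := ((exp(2h) - 1)/(2h)) • (du * exp(u)), and dθ := exp(u) * dη + dx * η. Then θ * dθ = dθ * θ. -/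
/-!
A relation `[u, b] = c b` says that `b` intertwines `u` with `u - c`, so `b` can be moved
across `exp u` at the cost of the scalar `exp (-c)`. Moving `η` and `dη` across `exp u` in this
way, every term of `θ dθ` and `dθ θ` containing `η ⋯ η` vanishes (using `η² = 0` and
`η du = -du η`), and what remains on both sides is `exp (-h) • (exp u * exp u * (η dη))`,
up to `η dη = dη η`.
-/

open NormedSpace

theorem mul_exp_eq_smul_exp_mul_of_sub_eq_smul {𝕂 A : Type*} [RCLike 𝕂] [NormedRing A]
    [NormedAlgebra 𝕂 A] [CompleteSpace A] {u b : A} {c : 𝕂} (hub : u * b - b * u = c • b) :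
    b * exp u = exp (-c) • (exp u * b) := by
  let : NormedAlgebra ℚ A := .restrictScalars ℚ 𝕂 A
  have hsemi : SemiconjBy b u (u - algebraMap 𝕂 A c) := by
    rw [SemiconjBy, sub_mul, Algebra.algebraMap_eq_smul_one, smul_one_mul, ← hub]
    abel
  rw [hsemi.exp_right.eq, sub_eq_add_neg, ← map_neg,
    exp_add_of_commute (Algebra.commutes _ _).symm, ← algebraMap_exp_comm,
    Algebra.algebraMap_eq_smul_one, mul_smul_one, smul_mul_assoc]

theorem theta_dtheta_relation_general
    {A : Type*} [NormedRing A] [NormedAlgebra ℂ A] [CompleteSpace A]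
    (u η du dη : A) (h : ℂ)
    (hη : u * η - η * u = h • η)
    (hη2 : η * η = 0)
    (hdη : u * dη - dη * u = h • dη)
    (hanti : η * du = -(du * η))
    (hcomm : η * dη = dη * η) :
    let θ := NormedSpace.exp u * η
    let dx := ((Complex.exp (2 * h) - 1) / (2 * h)) • (du * NormedSpace.exp u)
    let dθ := NormedSpace.exp u * dη + dx * η
    θ * dθ = dθ * θ := by
  intro θ dx dθ
  set E := exp u
  have hηE : η * E = exp (-h) • (E * η) := mul_exp_eq_smul_exp_mul_of_sub_eq_smul hη
  have hdηE : dη * E = exp (-h) • (E * dη) := mul_exp_eq_smul_exp_mul_of_sub_eq_smul hdη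
  have hηEη : η * E * η = 0 := by
    rw [hηE, smul_mul_assoc, mul_assoc, hη2, mul_zero, smul_zero]
  obtain ⟨s, hdx⟩ : ∃ s : ℂ, dx = s • (du * E) := ⟨_, rfl⟩
  have hηdxη : η * dx * η = 0 := by
    rw [hdx, mul_smul_comm, smul_mul_assoc, ← mul_assoc, hanti, neg_mul, neg_mul,
      mul_assoc du, mul_assoc du, hηEη, mul_zero, neg_zero, smul_zero]
  calc θ * dθ = E * (η * E) * dη + E * (η * dx * η) := by simp only [θ, dθ]; noncomm_ring
    _ = exp (-h) • (E * E * (η * dη)) := by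
      rw [hηE, hηdxη]; simp only [mul_smul_comm, smul_mul_assoc, mul_zero, add_zero, mul_assoc]
    _ = exp (-h) • (E * E * (dη * η)) := by rw [hcomm]
    _ = E * (dη * E) * η + dx * (η * E * η) := by
      rw [hdηE, hηEη]; simp only [mul_smul_comm, smul_mul_assoc, mul_zero, add_zero, mul_assoc]
    _ = dθ * θ := by simp only [θ, dθ]; noncomm_ring

/-- From the Lie superalgebra relations `[u, η] = h η`, `η² = 0` and the
calculus relations `[u, du] = 2h du`, `[u, dη] = h dη`, `{η, du} = 0`,
`[η, dη] = 0`, with `θ = exp u * η`, `dx = ((e^{2h}-1)/(2h)) • (du exp u)`,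
`dθ = exp u * dη + dx η`, we recover `θ dθ = dθ θ`. -/
theorem theta_dtheta_relation
    {A : Type*} [NormedRing A] [NormedAlgebra ℂ A] [CompleteSpace A]
    (u η du dη : A) (h : ℂ) (hne : h ≠ 0)
    (hη : u * η - η * u = h • η)
    (hη2 : η * η = 0)
    (hdu : u * du - du * u = (2 * h) • du)
    (hdη : u * dη - dη * u = h • dη)
    (hanti : η * du = -(du * η))
    (hcomm : η * dη = dη * η) :
    let θ := NormedSpace.exp u * η
    let dx := ((Complex.exp (2 * h) - 1) / (2 * h)) • (du * NormedSpace.exp u)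
    let dθ := NormedSpace.exp u * dη + dx * η
    θ * dθ = dθ * θ :=
  theta_dtheta_relation_general u η du dη h hη hη2 hdη hanti hcomm
end
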